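/- Fix integers m, n ≥ 1. The set of parameter vectors K ∈ ℝ^{m(2n-1)} for which the symmetric matrix A(K) + D has an eigenvalue of algebraic multiplicity at least two (equivalently, for which the characteristic polynomial of A(K) + D has a repeated root) has Lebesgue measure zero. -/

import Mathlib

/-!
The bad set lies in the zero set of `K ↦ Res(χ_K, χ_K')`, the resultant of the characteristic
polynomial of `A(K) + D` and its derivative, which is a real polynomial in the entries of `K`.
This polynomial does not vanish identically: for injective `d`, the resultant of `diag d + s D`
is a polynomial in `s` that is nonzero at `s = 0`, so it is nonzero at some `s ≠ 0`, and then
`A(s⁻¹ d, 0) + D = s⁻¹ (diag d + s D)` has a separable characteristic polynomial. Finally, the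
zero set of a nonzero real polynomial is Lebesgue-null, by induction on the number of variables
and Fubini: off a null set of the other coordinates the slice is the zero set of a nonzero
polynomial in one variable, hence finite.
-/

open MeasureTheory

/-- The block-diagonal matrix A(K) with symmetric tridiagonal blocks, with
diagonal parameters `a` and off-diagonal parameters `b`. -/
def blockTridiag {m n : ℕ} (a : Fin m → Fin n → ℝ) (b : Fin m → Fin (n - 1) → ℝ) :
    Matrix (Fin m × Fin n) (Fin m × Fin n) ℝ :=
  Matrix.of fun p q =>
    if p.1 = q.1 then
      (if p.2 = q.2 then a p.1 p.2 else 0)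
        + (∑ j : Fin (n - 1), if (p.2 : ℕ) = (j : ℕ) ∧ (q.2 : ℕ) = (j : ℕ) + 1 then b p.1 j else 0)
        + (∑ j : Fin (n - 1), if (q.2 : ℕ) = (j : ℕ) ∧ (p.2 : ℕ) = (j : ℕ) + 1 then b p.1 j else 0)
    else 0

namespace Polynomial

variable {R : Type*} [CommRing R]

theorem Monic.isUnit_resultant_derivative_iff {f : R[X]} (hf : f.Monic) :
    IsUnit (resultant f (derivative f) f.natDegree (f.natDegree - 1)) ↔ f.Separable := by
  obtain ⟨k, hk⟩ := Nat.exists_eq_add_of_le (natDegree_derivative_le f)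
  rw [hk, resultant_add_right_deg _ _ _ _ _ le_rfl, hf.coeff_natDegree, one_pow, one_mul]
  exact isUnit_resultant_iff_isCoprime hf

theorem Separable.comp_C_mul_X {f : R[X]} (hf : f.Separable) {a : R} (ha : IsUnit a) :
    (f.comp (C a * X)).Separable := by
  rw [Separable, derivative_comp, derivative_C_mul_X,
    isCoprime_mul_unit_left_right (isUnit_C.mpr ha)]
  exact IsCoprime.map hf (compRingHom (C a * X))

end Polynomial

namespace Matrix

open Polynomial

variable {n : Type*} [Fintype n] [DecidableEq n]

/-- The Sylvester sizes are fixed to `card n` and `card n - 1` instead of the actual degrees, so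
that the definition commutes with ring homomorphisms, which may lower the degree of `χ'`. -/
noncomputable def charpolyDerivResultant {R : Type*} [CommRing R] (M : Matrix n n R) : R :=
  resultant M.charpoly (derivative M.charpoly) (Fintype.card n) (Fintype.card n - 1)

theorem charpolyDerivResultant_map {R S : Type*} [CommRing R] [CommRing S] (f : R →+* S)
    (M : Matrix n n R) : (M.map f).charpolyDerivResultant = f M.charpolyDerivResultant := by
  rw [charpolyDerivResultant, charpoly_map, derivative_map, resultant_map_map,
    charpolyDerivResultant]

variable {K : Type*} [Field K]

theorem charpolyDerivResultant_ne_zero_iff (M : Matrix n n K) :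
    M.charpolyDerivResultant ≠ 0 ↔ M.charpoly.Separable := by
  rw [← isUnit_iff_ne_zero, charpolyDerivResultant, ← M.charpoly_natDegree_eq_dim]
  exact M.charpoly_monic.isUnit_resultant_derivative_iff

theorem charpolyDerivResultant_eq_zero_of_sq_dvd (M : Matrix n n K) {μ : K}
    (hμ : (X - C μ) ^ 2 ∣ M.charpoly) : M.charpolyDerivResultant = 0 := by
  by_contra h
  exact not_isUnit_X_sub_C μ (isUnit_of_self_mul_dvd_separable
    ((charpolyDerivResultant_ne_zero_iff M).mp h) (by rwa [← sq]))

theorem charpoly_smul [Infinite K] {c : K} (hc : c ≠ 0) (M : Matrix n n K) :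
    (c • M).charpoly = C (c ^ Fintype.card n) * M.charpoly.comp (C c⁻¹ * X) := by
  refine Polynomial.funext fun x => ?_
  have hscalar : c • scalar n (c⁻¹ * x) = scalar n x := by
    ext i j
    by_cases h : i = j <;> simp [h, hc]
  rw [eval_mul, eval_comp, eval_C, eval_mul, eval_C, eval_X, eval_charpoly, eval_charpoly,
    ← det_smul, smul_sub, hscalar]

theorem separable_charpoly_smul [Infinite K] {M : Matrix n n K} (hM : M.charpoly.Separable)
    {c : K} (hc : c ≠ 0) : (c • M).charpoly.Separable := by
  rw [charpoly_smul hc]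
  exact (hM.comp_C_mul_X (inv_ne_zero hc).isUnit).unit_mul (isUnit_C.mpr (pow_ne_zero _ hc).isUnit)

theorem exists_separable_charpoly_smul_diagonal_add [Infinite K] (D : Matrix n n K) {d : n → K}
    (hd : Function.Injective d) : ∃ t : K, (t • diagonal d + D).charpoly.Separable := by
  set Q : K[X] := (diagonal (C ∘ d) + (X : K[X]) • D.map C).charpolyDerivResultant
  have hQ : ∀ s : K, Q.eval s = (diagonal d + s • D).charpolyDerivResultant := fun s => by
    rw [← coe_evalRingHom, ← charpolyDerivResultant_map]
    congr 1
    ext i j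
    by_cases h : i = j <;> simp [h] <;> ring
  have hQ0 : Q.eval 0 ≠ 0 := by
    rw [hQ, zero_smul, add_zero, charpolyDerivResultant_ne_zero_iff, charpoly_diagonal]
    exact separable_prod_X_sub_C_iff.mpr hd
  have hQne : Q ≠ 0 := fun h => hQ0 (by rw [h, eval_zero])
  obtain ⟨s, hs⟩ := ((finite_setOfPred_isRoot hQne).insert (0 : K)).infinite_compl.nonempty
  simp only [Set.mem_compl_iff, Set.mem_insert_iff, Set.mem_ofPred_eq, IsRoot.def, not_or] at hs
  obtain ⟨hs0, hs⟩ := hs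
  refine ⟨s⁻¹, ?_⟩
  rw [hQ] at hs
  have hsep := separable_charpoly_smul ((charpolyDerivResultant_ne_zero_iff _).mp hs)
    (inv_ne_zero hs0)
  simpa [smul_add, smul_smul, hs0] using hsep

end Matrix

namespace MvPolynomial

theorem measurableSet_setOf_eval_eq_zero {ι : Type*} [Fintype ι] (P : MvPolynomial ι ℝ) :
    MeasurableSet {x : ι → ℝ | eval x P = 0} :=
  (continuous_eval P).measurable (measurableSet_singleton 0)

theorem volume_setOf_eval_eq_zero_of_fin :
    ∀ {k : ℕ} {P : MvPolynomial (Fin k) ℝ}, P ≠ 0 → volume {x : Fin k → ℝ | eval x P = 0} = 0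
  | 0, P, hP => by
    obtain ⟨c, rfl⟩ := C_surjective (Fin 0) P
    have hc : c ≠ 0 := fun h => hP (by rw [h, map_zero])
    simp [hc]
  | k + 1, P, hP => by
    set Q := finSuccEquiv ℝ k P
    obtain ⟨i, hi⟩ : ∃ i, Q.coeff i ≠ 0 := by
      by_contra! h
      exact hP ((finSuccEquiv ℝ k).injective (by ext1 i; simp [Q, h i]))
    have hslice : ∀ᵐ s : Fin k → ℝ, volume {y : ℝ | eval (Fin.cons y s) P = 0} = 0 := by
      filter_upwards [measure_eq_zero_iff_ae_notMem.mp (volume_setOf_eval_eq_zero_of_fin hi)]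
        with s hs
      have hQs : Q.map (eval s) ≠ 0 := fun h => hs (by simpa using congrArg (·.coeff i) h)
      simp only [eval_eq_eval_mv_eval']
      exact (Polynomial.finite_setOfPred_isRoot hQs).measure_zero _
    have hmp := (volume_preserving_piFinSuccAbove (fun _ : Fin (k + 1) => ℝ) 0).symm
    rw [← hmp.measure_preimage (measurableSet_setOf_eval_eq_zero P).nullMeasurableSet,
      Measure.volume_eq_prod, Measure.prod_apply_symm
        ((measurableSet_setOf_eval_eq_zero P).preimage (MeasurableEquiv.measurable _))]
    refine (lintegral_congr_ae (hslice.mono fun s hs => ?_)).trans lintegral_zero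
    simpa [MeasurableEquiv.piFinSuccAbove_symm_apply, Fin.insertNth_zero', Fin.consEquiv]
      using hs

theorem volume_setOf_eval_eq_zero {ι : Type*} [Fintype ι] {P : MvPolynomial ι ℝ} (hP : P ≠ 0) :
    volume {x : ι → ℝ | eval x P = 0} = 0 := by
  set e := (Fintype.equivFin ι).symm
  have hmp := volume_measurePreserving_piCongrLeft (fun _ : ι => ℝ) e
  rw [← hmp.measure_preimage (measurableSet_setOf_eval_eq_zero P).nullMeasurableSet]
  have hP' : rename e.symm P ≠ 0 := fun h =>
    hP (rename_injective _ e.symm.injective (h.trans (map_zero _).symm))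
  convert volume_setOf_eval_eq_zero_of_fin hP' using 3
  ext y
  simp only [MeasurableEquiv.piCongrLeft, Equiv.piCongrLeft, Equiv.symm_symm,
    Equiv.piCongrLeft'_symm, MeasurableEquiv.coe_mk, Set.preimage_ofPred_eq, Set.mem_ofPred_eq,
    eval_rename]
  rfl

end MvPolynomial

theorem MeasureTheory.measurePreserving_curry_symm (α β X : Type*) [Fintype α] [Fintype β]
    [MeasureSpace X] [SigmaFinite (volume : Measure X)] :
    MeasurePreserving (MeasurableEquiv.curry α β X).symm volume volume := by
  classical
  refine ⟨(MeasurableEquiv.curry α β X).symm.measurable, (Measure.pi_eq fun s hs => ?_).symm⟩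
  have hpre : (MeasurableEquiv.curry α β X).symm ⁻¹' Set.univ.pi s
      = Set.univ.pi fun a => Set.univ.pi fun b => s (a, b) := by
    ext f
    simp [Set.mem_pi, Prod.forall]
  rw [MeasurableEquiv.map_apply, hpre, volume_pi_pi, Fintype.prod_prod_type]
  exact Finset.prod_congr rfl fun a _ => volume_pi_pi _

def MeasurableEquiv.uncurrySum (α β γ X : Type*) [MeasurableSpace X] :
    (α → β → X) × (α → γ → X) ≃ᵐ (α × β ⊕ α × γ → X) :=
  ((curry α β X).symm.prodCongr (curry α γ X).symm).trans (sumPiEquivProdPi fun _ => X).symm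

theorem MeasurableEquiv.uncurrySum_apply {α β γ X : Type*} [MeasurableSpace X]
    (K : (α → β → X) × (α → γ → X)) :
    uncurrySum α β γ X K = Sum.elim (Function.uncurry K.1) (Function.uncurry K.2) := by
  ext (_ | _) <;> rfl

theorem MeasureTheory.measurePreserving_uncurrySum (α β γ X : Type*) [Fintype α] [Fintype β]
    [Fintype γ] [MeasureSpace X] [SigmaFinite (volume : Measure X)] :
    MeasurePreserving (MeasurableEquiv.uncurrySum α β γ X) volume volume :=
  (volume_measurePreserving_sumPiEquivProdPi_symm _).comp
    ((measurePreserving_curry_symm α β X).prod (measurePreserving_curry_symm α γ X))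

theorem blockTridiag_zero_right {m n : ℕ} (a : Fin m → Fin n → ℝ) :
    blockTridiag a 0 = Matrix.diagonal (Function.uncurry a) := by
  ext ⟨i, j⟩ ⟨i', j'⟩
  by_cases hi : i = i' <;> by_cases hj : j = j' <;> simp [blockTridiag, hi, hj]

noncomputable def genericBlockTridiag (m n : ℕ) :
    Matrix (Fin m × Fin n) (Fin m × Fin n)
      (MvPolynomial (Fin m × Fin n ⊕ Fin m × Fin (n - 1)) ℝ) :=
  Matrix.of fun p q =>
    if p.1 = q.1 then
      (if p.2 = q.2 then MvPolynomial.X (.inl p) else 0)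
        + (∑ j : Fin (n - 1), if (p.2 : ℕ) = (j : ℕ) ∧ (q.2 : ℕ) = (j : ℕ) + 1 then
            MvPolynomial.X (.inr (p.1, j)) else 0)
        + (∑ j : Fin (n - 1), if (q.2 : ℕ) = (j : ℕ) ∧ (p.2 : ℕ) = (j : ℕ) + 1 then
            MvPolynomial.X (.inr (p.1, j)) else 0)
    else 0

theorem genericBlockTridiag_map_eval {m n : ℕ} (a : Fin m → Fin n → ℝ)
    (b : Fin m → Fin (n - 1) → ℝ) :
    (genericBlockTridiag m n).map
        (MvPolynomial.eval (Sum.elim (Function.uncurry a) (Function.uncurry b)))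
      = blockTridiag a b := by
  ext p q
  simp only [genericBlockTridiag, blockTridiag, Matrix.map_apply, Matrix.of_apply,
    apply_ite (MvPolynomial.eval _), map_add, map_sum, map_zero, MvPolynomial.eval_X,
    Sum.elim_inl, Sum.elim_inr]
  rfl

theorem eval_charpolyDerivResultant_genericBlockTridiag_add {m n : ℕ}
    (D : Matrix (Fin m × Fin n) (Fin m × Fin n) ℝ)
    (K : (Fin m → Fin n → ℝ) × (Fin m → Fin (n - 1) → ℝ)) :
    MvPolynomial.eval (MeasurableEquiv.uncurrySum _ _ _ ℝ K)
        (genericBlockTridiag m n + D.map MvPolynomial.C).charpolyDerivResultant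
      = (blockTridiag K.1 K.2 + D).charpolyDerivResultant := by
  rw [MeasurableEquiv.uncurrySum_apply, ← Matrix.charpolyDerivResultant_map,
    Matrix.map_add _ (map_add _), genericBlockTridiag_map_eval]
  congr 2
  ext
  simp

theorem charpolyDerivResultant_genericBlockTridiag_add_ne_zero {m n : ℕ}
    (D : Matrix (Fin m × Fin n) (Fin m × Fin n) ℝ) :
    (genericBlockTridiag m n + D.map MvPolynomial.C).charpolyDerivResultant ≠ 0 := by
  set d : Fin m × Fin n → ℝ := fun p => ((Fintype.equivFin _ p : ℕ) : ℝ)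
  have hd : Function.Injective d :=
    Nat.cast_injective.comp (Fin.val_injective.comp (Fintype.equivFin _).injective)
  obtain ⟨t, ht⟩ := Matrix.exists_separable_charpoly_smul_diagonal_add D hd
  intro h
  have := eval_charpolyDerivResultant_genericBlockTridiag_add D (Function.curry (t • d), 0)
  rw [h, map_zero, blockTridiag_zero_right, Function.uncurry_curry, Matrix.diagonal_smul] at this
  exact (Matrix.charpolyDerivResultant_ne_zero_iff _).mpr ht this.symm

theorem stmt_14 (m n : ℕ)
    (D : Matrix (Fin m × Fin n) (Fin m × Fin n) ℝ) :
    volume { K : (Fin m → Fin n → ℝ) × (Fin m → Fin (n - 1) → ℝ) |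
      ∃ μ : ℝ, (Polynomial.X - Polynomial.C μ) ^ 2 ∣
        (blockTridiag K.1 K.2 + D).charpoly } = 0 := by
  set P := (genericBlockTridiag m n + D.map MvPolynomial.C).charpolyDerivResultant
  have hnull : volume (MeasurableEquiv.uncurrySum _ _ _ ℝ ⁻¹' {x | MvPolynomial.eval x P = 0})
      = 0 := by
    rw [(measurePreserving_uncurrySum _ _ _ _).measure_preimage
      (MvPolynomial.measurableSet_setOf_eval_eq_zero P).nullMeasurableSet]
    exact MvPolynomial.volume_setOf_eval_eq_zero
      (charpolyDerivResultant_genericBlockTridiag_add_ne_zero D)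
  refine measure_mono_null (fun K ⟨μ, hμ⟩ => ?_) hnull
  rw [Set.mem_preimage, Set.mem_ofPred_eq, eval_charpolyDerivResultant_genericBlockTridiag_add]
  exact Matrix.charpolyDerivResultant_eq_zero_of_sq_dvd _ hμ
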